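/- Let (Ω, ℱ, P) be a probability space with a filtration (ℱ_i)_{i≥0}, let S be a finite nonempty set with |S| elements, and let X_1, X_2, … be functions from Ω to (S → ℝ) such that each X_i is ℱ_i-measurable, E[ X_i(s') | ℱ_{i−1} ] = 0 almost surely for every s' ∈ S, and Σ_{s'∈S} |X_i(s')| ≤ 2 almost surely. Then for every n ≥ 1 and every ε > 0, P( Σ_{s'∈S} | Σ_{i=1}^{n} X_i(s') | ≥ ε ) ≤ 2^{|S|} · exp( −ε² / (8n) ). -/

import Mathlib

/-!
For a sign vector `x ∈ {-1, 1}^S` the scalar sequence `Y_i = ⟨X_i, x⟩` is a martingale difference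
sequence with `|Y_i| ≤ 2`, and `‖∑ X_i‖₁` is the largest of the `∑ Y_i`. For a scalar sequence
bounded by `c`, convexity of `exp` on `[-c t, c t]` gives the conditional Hoeffding bound
`E[exp (t Y_i) | ℱ_{i-1}] ≤ cosh (c t) ≤ exp (c² t² / 2)`; the tower property then gives
`E[exp (t ∑ Y_i)] ≤ exp (n c² t² / 2)`, and Chernoff's bound with `t = ε / (n c²)` gives
`P(∑ Y_i ≥ ε) ≤ exp (-ε² / (2 n c²))`. A union bound over the `2^|S|` sign vectors concludes.
-/

open MeasureTheory Real Finset

theorem Real.exp_mul_le_cosh_add_mul_of_abs_le {c y : ℝ} (hy : |y| ≤ c) (t : ℝ) :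
    exp (t * y) ≤ cosh (c * t) + sinh (c * t) / c * y := by
  obtain ⟨hyl, hyr⟩ := abs_le.1 hy
  rcases (abs_nonneg y |>.trans hy).eq_or_lt with rfl | hc
  · simp [show y = 0 by linarith]
  -- `t * y` is a convex combination of `-(c * t)` and `c * t`
  have hconv := convexOn_exp.2 (Set.mem_univ (-(c * t))) (Set.mem_univ (c * t))
    (div_nonneg (sub_nonneg.2 hyr) (by positivity) : 0 ≤ (c - y) / (2 * c))
    (div_nonneg (by linarith) (by positivity) : 0 ≤ (c + y) / (2 * c)) (by field_simp; ring)
  have hty : (c - y) / (2 * c) * -(c * t) + (c + y) / (2 * c) * (c * t) = t * y := by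
    field_simp; ring
  simp only [smul_eq_mul, hty] at hconv
  refine hconv.trans_eq ?_
  rw [cosh_eq, sinh_eq]
  field_simp
  ring

theorem condExp_exp_mul_le_of_abs_le {Ω : Type*} {m m0 : MeasurableSpace Ω} {μ : Measure Ω}
    [IsFiniteMeasure μ] (hm : m ≤ m0) {Y : Ω → ℝ} {c : ℝ} (hY : AEMeasurable Y μ)
    (hYc : ∀ᵐ ω ∂μ, |Y ω| ≤ c) (hY0 : μ[Y | m] =ᵐ[μ] 0) (t : ℝ) :
    μ[fun ω => exp (t * Y ω) | m] ≤ᵐ[μ] fun _ => exp (c ^ 2 * t ^ 2 / 2) := by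
  have hYc' : ∀ᵐ ω ∂μ, Y ω ∈ Set.Icc (-c) c := hYc.mono fun ω => abs_le.1
  have hYint : Integrable Y μ := .of_mem_Icc _ _ hY hYc'
  have hline : μ[(fun _ => cosh (c * t)) + (sinh (c * t) / c) • Y | m]
      =ᵐ[μ] fun _ => cosh (c * t) := by
    filter_upwards [condExp_add (integrable_const _) (hYint.smul (sinh (c * t) / c)) m,
      condExp_smul (sinh (c * t) / c) Y m, hY0] with ω h1 h2 h3
    rw [h1, Pi.add_apply, h2, condExp_const hm]
    simp [h3]
  filter_upwards [condExp_mono (m := m) (ProbabilityTheory.integrable_exp_mul_of_mem_Icc hY hYc')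
    ((integrable_const (cosh (c * t))).add (hYint.smul (sinh (c * t) / c)))
    (hYc.mono fun ω hω => exp_mul_le_cosh_add_mul_of_abs_le hω t), hline] with ω h1 h2
  calc _ ≤ _ := h1
    _ = cosh (c * t) := h2
    _ ≤ exp (c ^ 2 * t ^ 2 / 2) := by rw [← mul_pow]; exact cosh_le_exp_half_sq _

theorem integral_mul_le_of_condExp_le {Ω : Type*} {m m0 : MeasurableSpace Ω} {μ : Measure Ω}
    [IsFiniteMeasure μ] (hm : m ≤ m0) {F G : Ω → ℝ} {C : ℝ} (hF : StronglyMeasurable[m] F)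
    (hF0 : 0 ≤ F) (hF_int : Integrable F μ) (hG : Integrable G μ) (hFG : Integrable (F * G) μ)
    (hGC : μ[G | m] ≤ᵐ[μ] fun _ => C) :
    ∫ ω, F ω * G ω ∂μ ≤ (∫ ω, F ω ∂μ) * C := by
  have hpull : μ[F * G | m] =ᵐ[μ] F * μ[G | m] := condExp_mul_of_stronglyMeasurable_left hF hFG hG
  calc ∫ ω, F ω * G ω ∂μ = ∫ ω, (μ[F * G | m]) ω ∂μ := (integral_condExp hm).symm
    _ = ∫ ω, F ω * (μ[G | m]) ω ∂μ := integral_congr_ae hpull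
    _ ≤ ∫ ω, F ω * C ∂μ := by
      refine integral_mono_ae (integrable_condExp.congr hpull) (hF_int.mul_const C) ?_
      filter_upwards [hGC] with ω hω using mul_le_mul_of_nonneg_left hω (hF0 ω)
    _ = (∫ ω, F ω ∂μ) * C := integral_mul_const C F

theorem condExp_sum_mul_ae_eq_zero {Ω S : Type*} [Fintype S] {m m0 : MeasurableSpace Ω}
    {μ : Measure Ω} {f : S → Ω → ℝ} (hf : ∀ s, Integrable (f s) μ)
    (hf0 : ∀ s, μ[f s | m] =ᵐ[μ] 0) (x : S → ℝ) :
    μ[fun ω => ∑ s, x s * f s ω | m] =ᵐ[μ] 0 := by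
  have hfun : (fun ω => ∑ s, x s * f s ω) = ∑ s, x s • f s := by ext ω; simp
  rw [hfun]
  refine (condExp_finsetSum (fun s _ => (hf s).smul (x s)) m).trans ?_
  refine (eventuallyEq_sum fun s _ =>
    (condExp_smul (x s) (f s) m).trans ((hf0 s).const_smul (x s))).trans ?_
  simp

section

variable {Ω : Type*} {m0 : MeasurableSpace Ω}

structure IsBoundedMartingaleDiff (μ : Measure Ω) (ℱ : Filtration ℕ m0) (Y : ℕ → Ω → ℝ) (c : ℝ) :
    Prop where
  measurable : ∀ i, 1 ≤ i → Measurable[ℱ i] (Y i)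
  condExp_eq_zero : ∀ i, 1 ≤ i → μ[Y i | ℱ (i - 1)] =ᵐ[μ] 0
  ae_abs_le : ∀ i, 1 ≤ i → ∀ᵐ ω ∂μ, |Y i ω| ≤ c

namespace IsBoundedMartingaleDiff

variable {μ : Measure Ω} {ℱ : Filtration ℕ m0} {Y : ℕ → Ω → ℝ} {c : ℝ}

theorem measurable_sum (hY : IsBoundedMartingaleDiff μ ℱ Y c) (n : ℕ) :
    Measurable[ℱ n] fun ω => ∑ i ∈ Icc 1 n, Y i ω :=
  Finset.measurable_fun_sum _ fun i hi =>
    (hY.measurable i (mem_Icc.1 hi).1).mono (ℱ.mono (mem_Icc.1 hi).2) le_rfl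

theorem ae_abs_sum_le (hY : IsBoundedMartingaleDiff μ ℱ Y c) (n : ℕ) :
    ∀ᵐ ω ∂μ, |∑ i ∈ Icc 1 n, Y i ω| ≤ n * c := by
  have hall : ∀ᵐ ω ∂μ, ∀ i ∈ Icc 1 n, |Y i ω| ≤ c :=
    (Filter.eventually_all_finset _).2 fun i hi => hY.ae_abs_le i (mem_Icc.1 hi).1
  filter_upwards [hall] with ω hω
  calc |∑ i ∈ Icc 1 n, Y i ω| ≤ ∑ i ∈ Icc 1 n, |Y i ω| := abs_sum_le_sum_abs _ _
    _ ≤ ∑ i ∈ Icc 1 n, c := sum_le_sum hω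
    _ = n * c := by simp

theorem integrable_exp_mul_sum [IsFiniteMeasure μ] (hY : IsBoundedMartingaleDiff μ ℱ Y c)
    (t : ℝ) (n : ℕ) : Integrable (fun ω => exp (t * ∑ i ∈ Icc 1 n, Y i ω)) μ :=
  ProbabilityTheory.integrable_exp_mul_of_mem_Icc
    ((hY.measurable_sum n).mono (ℱ.le n) le_rfl).aemeasurable
    ((hY.ae_abs_sum_le n).mono fun _ => abs_le.1)

theorem integral_exp_mul_sum_le [IsProbabilityMeasure μ] (hY : IsBoundedMartingaleDiff μ ℱ Y c)
    (t : ℝ) (n : ℕ) :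
    ∫ ω, exp (t * ∑ i ∈ Icc 1 n, Y i ω) ∂μ ≤ exp (n * (c ^ 2 * t ^ 2 / 2)) := by
  induction n with
  | zero => simp
  | succ n ih =>
    have hn : 1 ≤ n + 1 := Nat.le_add_left 1 n
    have hY_meas : AEMeasurable (Y (n + 1)) μ :=
      ((hY.measurable (n + 1) hn).mono (ℱ.le _) le_rfl).aemeasurable
    have hsum : (fun ω => exp (t * ∑ i ∈ Icc 1 (n + 1), Y i ω)) =
        (fun ω => exp (t * ∑ i ∈ Icc 1 n, Y i ω)) * fun ω => exp (t * Y (n + 1) ω) := by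
      ext ω; simp [sum_Icc_succ_top hn, mul_add, exp_add]
    calc ∫ ω, exp (t * ∑ i ∈ Icc 1 (n + 1), Y i ω) ∂μ
        ≤ (∫ ω, exp (t * ∑ i ∈ Icc 1 n, Y i ω) ∂μ) * exp (c ^ 2 * t ^ 2 / 2) := by
          refine (congrArg (integral μ) hsum).trans_le <| integral_mul_le_of_condExp_le (ℱ.le n)
            (measurable_exp.comp ((hY.measurable_sum n).const_mul t)).stronglyMeasurable
            (fun ω => (exp_pos _).le) (hY.integrable_exp_mul_sum t n)
            (ProbabilityTheory.integrable_exp_mul_of_mem_Icc hY_meas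
              ((hY.ae_abs_le (n + 1) hn).mono fun _ => abs_le.1))
            (hsum ▸ hY.integrable_exp_mul_sum t (n + 1))
            (condExp_exp_mul_le_of_abs_le (ℱ.le n) hY_meas (hY.ae_abs_le (n + 1) hn)
              (hY.condExp_eq_zero (n + 1) hn) t)
      _ ≤ exp (n * (c ^ 2 * t ^ 2 / 2)) * exp (c ^ 2 * t ^ 2 / 2) := by gcongr
      _ = exp ((n + 1 : ℕ) * (c ^ 2 * t ^ 2 / 2)) := by rw [← exp_add]; push_cast; ring_nf

theorem measure_sum_ge_le [IsProbabilityMeasure μ] (hY : IsBoundedMartingaleDiff μ ℱ Y c)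
    {ε : ℝ} (hε : 0 ≤ ε) (n : ℕ) :
    μ {ω | ε ≤ ∑ i ∈ Icc 1 n, Y i ω} ≤ ENNReal.ofReal (exp (-ε ^ 2 / (2 * n * c ^ 2))) := by
  set t := ε / (n * c ^ 2)
  -- `t` is the optimal Chernoff parameter; if `n * c ^ 2 = 0` both sides vanish as `x / 0 = 0`
  have hexponent : -t * ε + n * (c ^ 2 * t ^ 2 / 2) = -ε ^ 2 / (2 * n * c ^ 2) := by
    rcases eq_or_ne ((n : ℝ) * c ^ 2) 0 with h | h
    · simp [t, h, mul_assoc]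
    · simp only [t]
      field_simp
      ring
  rw [ENNReal.le_ofReal_iff_toReal_le (measure_ne_top _ _) (exp_pos _).le, ← hexponent, exp_add]
  calc (μ {ω | ε ≤ ∑ i ∈ Icc 1 n, Y i ω}).toReal
      ≤ exp (-t * ε) * ProbabilityTheory.mgf (fun ω => ∑ i ∈ Icc 1 n, Y i ω) μ t :=
        ProbabilityTheory.measure_ge_le_exp_mul_mgf ε (by positivity) (hY.integrable_exp_mul_sum t n)
    _ ≤ exp (-t * ε) * exp (n * (c ^ 2 * t ^ 2 / 2)) := by
        gcongr; exact hY.integral_exp_mul_sum_le t n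

end IsBoundedMartingaleDiff

theorem isBoundedMartingaleDiff_sum_mul {μ : Measure Ω} [IsFiniteMeasure μ]
    {ℱ : Filtration ℕ m0} {S : Type*} [Fintype S] {X : ℕ → Ω → S → ℝ} {c : ℝ}
    (hX_meas : ∀ i, 1 ≤ i → ∀ s, Measurable[ℱ i] (fun ω => X i ω s))
    (hX_mean : ∀ i, 1 ≤ i → ∀ s, μ[(fun ω => X i ω s) | ℱ (i - 1)] =ᵐ[μ] 0)
    (hX_bdd : ∀ i, 1 ≤ i → ∀ᵐ ω ∂μ, ∑ s, |X i ω s| ≤ c) {x : S → ℝ} (hx : ∀ s, |x s| ≤ 1) :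
    IsBoundedMartingaleDiff μ ℱ (fun i ω => ∑ s, x s * X i ω s) c where
  measurable i hi := Finset.measurable_fun_sum _ fun s _ => (hX_meas i hi s).const_mul (x s)
  condExp_eq_zero i hi := by
    refine condExp_sum_mul_ae_eq_zero (fun s => ?_) (hX_mean i hi) x
    refine .of_mem_Icc (-c) c ((hX_meas i hi s).mono (ℱ.le i) le_rfl).aemeasurable ?_
    filter_upwards [hX_bdd i hi] with ω hω
    exact abs_le.1 ((single_le_sum (fun s _ => abs_nonneg (X i ω s)) (mem_univ s)).trans hω)
  ae_abs_le i hi := by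
    filter_upwards [hX_bdd i hi] with ω hω
    calc |∑ s, x s * X i ω s| ≤ ∑ s, |x s * X i ω s| := abs_sum_le_sum_abs _ _
      _ ≤ ∑ s, |X i ω s| := sum_le_sum fun s _ => by
        rw [abs_mul]; exact mul_le_of_le_one_left (abs_nonneg _) (hx s)
      _ ≤ c := hω

end

noncomputable def signVectors (S : Type*) [Fintype S] [DecidableEq S] : Finset (S → ℝ) :=
  Fintype.piFinset fun _ => {-1, 1}

section signVectors

variable {S : Type*} [Fintype S] [DecidableEq S]

theorem card_signVectors : #(signVectors S) = 2 ^ Fintype.card S := by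
  rw [signVectors, Fintype.card_piFinset, prod_const, card_pair (by norm_num), card_univ]

theorem abs_le_one_of_mem_signVectors {x : S → ℝ} (hx : x ∈ signVectors S) (s : S) :
    |x s| ≤ 1 := by
  have hxs := Fintype.mem_piFinset.1 hx s
  simp only [mem_insert, mem_singleton] at hxs
  rcases hxs with h | h <;> simp [h]

theorem exists_mem_signVectors_sum_mul_eq_sum_abs (v : S → ℝ) :
    ∃ x ∈ signVectors S, ∑ s, x s * v s = ∑ s, |v s| := by
  refine ⟨fun s => if 0 ≤ v s then 1 else -1,
    Fintype.mem_piFinset.2 fun s => by split_ifs <;> simp, sum_congr rfl fun s _ => ?_⟩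
  dsimp only
  split_ifs with h
  · rw [one_mul, abs_of_nonneg h]
  · rw [neg_one_mul, abs_of_neg (not_le.1 h)]

end signVectors

theorem l1_martingale_concentration_general
    {Ω : Type*} {m0 : MeasurableSpace Ω} (μ : Measure Ω) [IsProbabilityMeasure μ]
    (ℱ : Filtration ℕ m0)
    {S : Type*} [Fintype S]
    (X : ℕ → Ω → S → ℝ)
    (hX_meas : ∀ i, 1 ≤ i → ∀ s' : S, Measurable[ℱ i] (fun ω => X i ω s'))
    (hX_mean : ∀ i, 1 ≤ i → ∀ s' : S,
      μ[(fun ω => X i ω s') | ℱ (i - 1)] =ᵐ[μ] 0)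
    (hX_bdd : ∀ i, 1 ≤ i → ∀ᵐ ω ∂μ, (∑ s', |X i ω s'|) ≤ 2)
    (n : ℕ) (ε : ℝ) (hε : 0 < ε) :
    μ {ω | ε ≤ ∑ s', |∑ i ∈ Finset.Icc 1 n, X i ω s'|} ≤
      ENNReal.ofReal ((2 : ℝ) ^ (Fintype.card S) * Real.exp (-ε ^ 2 / (8 * n))) := by
  classical
  let E (x : S → ℝ) : Set Ω := {ω | ε ≤ ∑ i ∈ Icc 1 n, ∑ s', x s' * X i ω s'}
  have hcover : {ω | ε ≤ ∑ s', |∑ i ∈ Icc 1 n, X i ω s'|} ⊆ ⋃ x ∈ signVectors S, E x := by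
    intro ω hω
    obtain ⟨x, hx, hxv⟩ :=
      exists_mem_signVectors_sum_mul_eq_sum_abs fun s' => ∑ i ∈ Icc 1 n, X i ω s'
    have hsigned : ∑ i ∈ Icc 1 n, ∑ s', x s' * X i ω s' = ∑ s', |∑ i ∈ Icc 1 n, X i ω s'| := by
      rw [sum_comm, ← hxv]
      simp only [mul_sum]
    exact Set.mem_biUnion hx (show ε ≤ _ from hsigned ▸ hω)
  have htail (x) (hx : x ∈ signVectors S) : μ (E x) ≤ ENNReal.ofReal (exp (-ε ^ 2 / (8 * n))) := by
    convert (isBoundedMartingaleDiff_sum_mul hX_meas hX_mean hX_bdd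
      (abs_le_one_of_mem_signVectors hx)).measure_sum_ge_le hε.le n using 4
    ring
  calc _ ≤ μ (⋃ x ∈ signVectors S, E x) := measure_mono hcover
    _ ≤ ∑ x ∈ signVectors S, μ (E x) := measure_biUnion_finset_le _ _
    _ ≤ ∑ x ∈ signVectors S, ENNReal.ofReal (exp (-ε ^ 2 / (8 * n))) := sum_le_sum htail
    _ = _ := by
        rw [sum_const, card_signVectors, ENNReal.ofReal_mul (by positivity), nsmul_eq_mul,
          ENNReal.ofReal_pow zero_le_two]
        simp

/-- Concentration of an `(S → ℝ)`-valued martingale difference sequence in ℓ¹-norm: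
if each `X_i` is `ℱ_i`-measurable, has conditional mean `0` given `ℱ_{i−1}`, and
ℓ¹-norm at most `2` a.s., then
`P( Σ_{s'} |Σ_{i=1}^n X_i(s')| ≥ ε ) ≤ 2^{|S|} · exp(−ε²/(8n))`. -/
theorem l1_martingale_concentration
    {Ω : Type*} {m0 : MeasurableSpace Ω} (μ : Measure Ω) [IsProbabilityMeasure μ]
    (ℱ : Filtration ℕ m0)
    {S : Type*} [Fintype S] [Nonempty S]
    (X : ℕ → Ω → S → ℝ)
    (hX_meas : ∀ i, 1 ≤ i → ∀ s' : S, Measurable[ℱ i] (fun ω => X i ω s'))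
    (hX_mean : ∀ i, 1 ≤ i → ∀ s' : S,
      μ[(fun ω => X i ω s') | ℱ (i - 1)] =ᵐ[μ] 0)
    (hX_bdd : ∀ i, 1 ≤ i → ∀ᵐ ω ∂μ, (∑ s', |X i ω s'|) ≤ 2)
    (n : ℕ) (hn : 1 ≤ n) (ε : ℝ) (hε : 0 < ε) :
    μ {ω | ε ≤ ∑ s', |∑ i ∈ Finset.Icc 1 n, X i ω s'|} ≤
      ENNReal.ofReal ((2 : ℝ) ^ (Fintype.card S) * Real.exp (-ε ^ 2 / (8 * n))) :=
  l1_martingale_concentration_general μ ℱ X hX_meas hX_mean hX_bdd n ε hε
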